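/- arXiv:1802.02655 — 4 statements merged into one kernel-verified Lean document; each statement's English description precedes it below -/
import Mathlib

section
/- (Change-of-variables identity underlying Theorem 4.1(ii) and Proposition 4.2.) Let 0 < α < 1, C > 0, r > 0, n ∈ ℕ with n ≥ 1, let g : (0,∞) → [0,∞), and set Θ(x) := Cα x^{−α} for x > 0. Fix t > 0 and u₁, …, u_n ∈ (0,1), and define t_n := t and t_{i−1} := t / ∏_{j=i}^n u_j for i = 1, …, n. Then r^{[n]} g(t) [ ∏_{i=0}^{n−1} Θ(t_i − t_{i+1}) / t_i ] · ∏_{i=1}^n (t_{i−1}/u_i) = r^{[n]} (C Γ(1−α))^n (Γ(nα+1)/Γ(n+1)) g(t) t^{−nα} ∏_{i=1}^n β_{iα, 1−α}(u_i), where r^{[n]} := r(r+1)⋯(r+n−1), ∏_{i=1}^n (t_{i−1}/u_i) is the Jacobian of the change of variables (t₀,…,t_n) ↦ (u₁,…,u_n,t) with u_i = t_i/t_{i−1}, and β_{a,b}(u) := u^{a−1}(1−u)^{b−1} Γ(a+b)/(Γ(a)Γ(b)) is the Beta(a,b) density. -/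
open MeasureTheory Set Finset

/-- The Beta(a,b) density `β_{a,b}(u) = u^{a-1}(1-u)^{b-1} Γ(a+b)/(Γ(a)Γ(b))`. -/
noncomputable def betaDensity (a b u : ℝ) : ℝ :=
  u ^ (a - 1) * (1 - u) ^ (b - 1) * Real.Gamma (a + b) / (Real.Gamma a * Real.Gamma b)

/-- Double product counting lemma: `∏_{i<n} ∏_{j=i+2}^n u_j = ∏_{i<n} u_{i+1}^i`. -/
lemma prod_tail_aux (u : ℕ → ℝ) : ∀ n : ℕ,
    ∏ i ∈ Finset.range n, ∏ j ∈ Finset.Icc (i + 2) n, u j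
      = ∏ i ∈ Finset.range n, u (i + 1) ^ i := by
  intro n
  induction n with
  | zero => simp
  | succ n ih =>
    rw [Finset.prod_range_succ, Finset.prod_range_succ]
    have h1 : ∀ i ∈ Finset.range n, ∏ j ∈ Finset.Icc (i + 2) (n + 1), u j
        = (∏ j ∈ Finset.Icc (i + 2) n, u j) * u (n + 1) := by
      intro i hi
      have hi' : i + 2 ≤ n + 1 := by
        have := Finset.mem_range.mp hi; omega
      exact Finset.prod_Icc_succ_top hi' u
    have h2 : Finset.Icc (n + 2) (n + 1) = ∅ := Finset.Icc_eq_empty (by omega)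
    rw [Finset.prod_congr rfl h1, Finset.prod_mul_distrib, Finset.prod_const, ih, h2,
      Finset.card_range, Finset.prod_empty, mul_one]

/-- Telescoping Gamma product:
`∏_{i<n} Γ((i+1)α + (1-α)) / (Γ((i+1)α) Γ(1-α)) = αⁿ Γ(n+1) / (Γ(nα+1) Γ(1-α)ⁿ)`. -/
lemma gamma_prod_aux (α : ℝ) (hα : 0 < α) (hα1 : α < 1) : ∀ n : ℕ,
    ∏ i ∈ Finset.range n,
        (Real.Gamma (((i : ℝ) + 1) * α + (1 - α))
          / (Real.Gamma (((i : ℝ) + 1) * α) * Real.Gamma (1 - α)))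
      = α ^ n * Real.Gamma ((n : ℝ) + 1)
          / (Real.Gamma ((n : ℝ) * α + 1) * Real.Gamma (1 - α) ^ n) := by
  intro n
  induction n with
  | zero => simp
  | succ n ih =>
    rw [Finset.prod_range_succ, ih]
    have key : ((n : ℝ) + 1) * α + (1 - α) = (n : ℝ) * α + 1 := by ring
    have hg1 : (0 : ℝ) < Real.Gamma ((n : ℝ) * α + 1) :=
      Real.Gamma_pos_of_pos (by positivity)
    have hg2 : (0 : ℝ) < Real.Gamma (((n : ℝ) + 1) * α) :=
      Real.Gamma_pos_of_pos (by positivity)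
    have hg3 : (0 : ℝ) < Real.Gamma (1 - α) := Real.Gamma_pos_of_pos (by linarith)
    have hgn : (0 : ℝ) < Real.Gamma ((n : ℝ) + 1) :=
      Real.Gamma_pos_of_pos (by positivity)
    have e1 : Real.Gamma ((n : ℝ) + 1 + 1) = ((n : ℝ) + 1) * Real.Gamma ((n : ℝ) + 1) :=
      Real.Gamma_add_one (by positivity)
    have e2 : Real.Gamma (((n : ℝ) + 1) * α + 1)
        = ((n : ℝ) + 1) * α * Real.Gamma (((n : ℝ) + 1) * α) :=
      Real.Gamma_add_one (by positivity)
    push_cast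
    rw [key, e1, e2]
    field_simp
    ring

/-- Change-of-variables identity underlying Theorem 4.1(ii) and Proposition 4.2:
with `Θ(x) = Cα x^{-α}`, `t_n = t` and `t_{i-1} = t / ∏_{j=i}^n u_j`, the joint density of
the remaining sums, multiplied by the Jacobian `∏ t_{i-1}/u_i`, factorises into
`r^{[n]} (CΓ(1-α))^n (Γ(nα+1)/Γ(n+1)) g(t) t^{-nα}` times Beta(iα, 1-α) densities. -/
theorem change_of_variables_stable_stick_breaking
    (α C r : ℝ) (hα : 0 < α) (hα1 : α < 1) (hC : 0 < C) (hr : 0 < r)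
    (n : ℕ) (hn : 1 ≤ n)
    (g : ℝ → ℝ) (hg : ∀ x > (0 : ℝ), 0 ≤ g x)
    (Θ : ℝ → ℝ) (hΘ : ∀ x > (0 : ℝ), Θ x = C * α * x ^ (-α))
    (t : ℝ) (ht : 0 < t)
    (u : ℕ → ℝ) (hu : ∀ i ∈ Finset.Icc 1 n, u i ∈ Ioo (0 : ℝ) 1)
    (ts : ℕ → ℝ) (hts : ∀ i ≤ n, ts i = t / ∏ j ∈ Finset.Icc (i + 1) n, u j) :
    (∏ i ∈ Finset.range n, (r + i)) * g t
        * (∏ i ∈ Finset.range n, Θ (ts i - ts (i + 1)) / ts i)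
        * ∏ i ∈ Finset.Icc 1 n, ts (i - 1) / u i
      = (∏ i ∈ Finset.range n, (r + i)) * (C * Real.Gamma (1 - α)) ^ n
          * (Real.Gamma (n * α + 1) / Real.Gamma (n + 1)) * g t * t ^ (-(n * α))
          * ∏ i ∈ Finset.Icc 1 n, betaDensity (i * α) (1 - α) (u i) := by
  -- basic positivity facts
  have hΓ1α : (0 : ℝ) < Real.Gamma (1 - α) := Real.Gamma_pos_of_pos (by linarith)
  have huIoo : ∀ j, 1 ≤ j → j ≤ n → 0 < u j ∧ u j < 1 := fun j h1 h2 =>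
    hu j (Finset.mem_Icc.mpr ⟨h1, h2⟩)
  have hP : ∀ i : ℕ, 0 < ∏ j ∈ Finset.Icc (i + 1) n, u j := by
    intro i
    refine Finset.prod_pos fun j hj => ?_
    have hj' := Finset.mem_Icc.mp hj
    exact (huIoo j (by omega) hj'.2).1
  have hts_pos : ∀ i ≤ n, 0 < ts i := by
    intro i hi; rw [hts i hi]; exact div_pos ht (hP i)
  -- relation between consecutive remaining sums
  have hts_rel : ∀ i < n, ts i = ts (i + 1) / u (i + 1) := by
    intro i hi
    have hU := (huIoo (i + 1) (by omega) (by omega)).1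
    rw [hts i (by omega), hts (i + 1) (by omega)]
    have hsplit : ∏ j ∈ Finset.Icc (i + 1) n, u j
        = u (i + 1) * ∏ j ∈ Finset.Icc (i + 2) n, u j := by
      rw [← Finset.Ico_add_one_right_eq_Icc, ← Finset.Ico_add_one_right_eq_Icc]
      exact Finset.prod_eq_prod_Ico_succ_bot (by omega) u
    rw [hsplit, div_div, mul_comm]
  -- reindexing the Icc products
  have hIcc : Finset.Icc 1 n = Finset.Ico 1 (n + 1) := (Finset.Ico_add_one_right_eq_Icc 1 n).symm
  have hJac : (∏ i ∈ Finset.Icc 1 n, ts (i - 1) / u i)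
      = ∏ i ∈ Finset.range n, ts i / u (i + 1) := by
    rw [hIcc, Finset.prod_Ico_eq_prod_range]
    refine Finset.prod_congr (by norm_num) fun k _ => ?_
    have h1 : 1 + k - 1 = k := by omega
    rw [h1, add_comm 1 k]
  have hBeta : (∏ i ∈ Finset.Icc 1 n, betaDensity (i * α) (1 - α) (u i))
      = ∏ k ∈ Finset.range n, betaDensity (((k : ℝ) + 1) * α) (1 - α) (u (k + 1)) := by
    rw [hIcc, Finset.prod_Ico_eq_prod_range]
    refine Finset.prod_congr (by norm_num) fun k _ => ?_
    rw [add_comm 1 k]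
    push_cast
    ring_nf
  -- the per-factor computation on the LHS
  have hfac : ∀ i ∈ Finset.range n,
      Θ (ts i - ts (i + 1)) / ts i * (ts i / u (i + 1))
        = (C * α * t ^ (-α)) * ((∏ j ∈ Finset.Icc (i + 2) n, u j) ^ (α : ℝ)
            * ((1 - u (i + 1)) ^ (-α) * u (i + 1) ^ (α - 1))) := by
    intro i hi
    have hi' : i < n := Finset.mem_range.mp hi
    have hui := huIoo (i + 1) (by omega) (by omega)
    have hv : 0 < u (i + 1) := hui.1
    have hv1 : 0 < 1 - u (i + 1) := by linarith [hui.2]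
    have hs : 0 < ts (i + 1) := hts_pos (i + 1) (by omega)
    have hs0 : 0 < ts i := hts_pos i (by omega)
    have hdiff : ts i - ts (i + 1) = ts (i + 1) * (1 - u (i + 1)) / u (i + 1) := by
      rw [hts_rel i hi']
      field_simp
    have hdpos : 0 < ts i - ts (i + 1) := by
      rw [hdiff]; positivity
    -- ts (i+1) = t / ∏_{j=i+2}^n u_j
    have htsn : ts (i + 1) = t / ∏ j ∈ Finset.Icc (i + 2) n, u j := hts (i + 1) (by omega)
    have hPi : 0 < ∏ j ∈ Finset.Icc (i + 2) n, u j := hP (i + 1)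
    rw [hΘ _ hdpos, hdiff]
    rw [Real.div_rpow (by positivity) hv.le, Real.mul_rpow hs.le hv1.le]
    rw [htsn, Real.div_rpow ht.le hPi.le]
    rw [Real.rpow_neg ht.le, Real.rpow_neg hPi.le, Real.rpow_neg hv1.le,
      Real.rpow_neg hv.le]
    have hvα : (0 : ℝ) < u (i + 1) ^ (α : ℝ) := Real.rpow_pos_of_pos hv α
    have hPα : (0 : ℝ) < (∏ j ∈ Finset.Icc (i + 2) n, u j) ^ (α : ℝ) :=
      Real.rpow_pos_of_pos hPi α
    have htα : (0 : ℝ) < t ^ (α : ℝ) := Real.rpow_pos_of_pos ht α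
    have hv1α : (0 : ℝ) < (1 - u (i + 1)) ^ (α : ℝ) := Real.rpow_pos_of_pos hv1 α
    have hexp : u (i + 1) ^ (α - 1) = u (i + 1) ^ (α : ℝ) / u (i + 1) := by
      rw [Real.rpow_sub hv, Real.rpow_one]
    rw [hexp]
    field_simp
  -- put the LHS into product form over `range n`
  rw [hJac, hBeta, mul_assoc, ← Finset.prod_mul_distrib, Finset.prod_congr rfl hfac]
  rw [Finset.prod_mul_distrib, Finset.prod_const, Finset.card_range,
    Finset.prod_mul_distrib, Finset.prod_mul_distrib]
  -- evaluate the product of powers of tail products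
  have hPprod : (∏ i ∈ Finset.range n, (∏ j ∈ Finset.Icc (i + 2) n, u j) ^ (α : ℝ))
      = ∏ i ∈ Finset.range n, u (i + 1) ^ ((i : ℝ) * α) := by
    rw [Real.finset_prod_rpow _ _ (fun i _ => (hP (i + 1)).le) α, prod_tail_aux u n,
      ← Real.finset_prod_rpow _ _ (fun i hi => pow_nonneg
        (le_of_lt (huIoo (i + 1) (by omega)
          (by have := Finset.mem_range.mp hi; omega)).1) i) α]
    refine Finset.prod_congr rfl fun i hi => ?_
    have hv : 0 < u (i + 1) := (huIoo (i + 1) (by omega)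
      (by have := Finset.mem_range.mp hi; omega)).1
    rw [Real.rpow_mul hv.le, Real.rpow_natCast]
  rw [hPprod]
  -- unfold the beta densities
  have hBeta2 : (∏ k ∈ Finset.range n, betaDensity (((k : ℝ) + 1) * α) (1 - α) (u (k + 1)))
      = (∏ k ∈ Finset.range n,
            (u (k + 1) ^ (((k : ℝ) + 1) * α - 1) * (1 - u (k + 1)) ^ (-α)))
        * ∏ k ∈ Finset.range n,
            (Real.Gamma (((k : ℝ) + 1) * α + (1 - α))
              / (Real.Gamma (((k : ℝ) + 1) * α) * Real.Gamma (1 - α))) := by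
    rw [← Finset.prod_mul_distrib]
    refine Finset.prod_congr rfl fun k _ => ?_
    unfold betaDensity
    have : (1 : ℝ) - α - 1 = -α := by ring
    rw [this]
    ring
  rw [hBeta2, gamma_prod_aux α hα hα1 n]
  -- combine the u-power products on the LHS
  have hupow : (∏ i ∈ Finset.range n, u (i + 1) ^ ((i : ℝ) * α))
        * ((∏ i ∈ Finset.range n, (1 - u (i + 1)) ^ (-α))
          * ∏ i ∈ Finset.range n, u (i + 1) ^ (α - 1))
      = ∏ k ∈ Finset.range n,
          (u (k + 1) ^ (((k : ℝ) + 1) * α - 1) * (1 - u (k + 1)) ^ (-α)) := by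
    rw [← Finset.prod_mul_distrib, ← Finset.prod_mul_distrib]
    refine Finset.prod_congr rfl fun k hk => ?_
    have hv : 0 < u (k + 1) := (huIoo (k + 1) (by omega)
      (by have := Finset.mem_range.mp hk; omega)).1
    have : u (k + 1) ^ ((k : ℝ) * α) * u (k + 1) ^ (α - 1)
        = u (k + 1) ^ (((k : ℝ) + 1) * α - 1) := by
      rw [← Real.rpow_add hv]
      ring_nf
    rw [← this]
    ring
  -- powers of constants
  have hconstpow : (C * α * t ^ (-α)) ^ n = C ^ n * α ^ n * t ^ (-((n : ℝ) * α)) := by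
    rw [mul_pow, mul_pow, ← Real.rpow_natCast (t ^ (-α)) n, ← Real.rpow_mul ht.le]
    congr 1
    ring
  -- finishing: pure algebra with nonzero Gamma values
  have hΓn1 : (0 : ℝ) < Real.Gamma ((n : ℝ) + 1) := Real.Gamma_pos_of_pos (by positivity)
  have hΓnα : (0 : ℝ) < Real.Gamma ((n : ℝ) * α + 1) := Real.Gamma_pos_of_pos (by positivity)
  rw [hupow, hconstpow, mul_pow]
  field_simp [hΓ1α.ne', hΓn1.ne', hΓnα.ne']
end

section
/- (Proposition 4.2.) Let 0 < α < 1, C > 0, r > 0, n ∈ ℕ with n ≥ 1, and let g : (0,∞) → [0,∞) be measurable. Then for every t > 0, with t_n := t, ∫_{t < t_{n−1} < t_{n−2} < ⋯ < t₀ < ∞} r^{[n]} g(t) ∏_{i=0}^{n−1} Cα (t_i − t_{i+1})^{−α} t_i^{−1} dt₀ ⋯ dt_{n−1} = L_n t^{−nα} g(t), where r^{[n]} := r(r+1)⋯(r+n−1) and L_n := r^{[n]} (C Γ(1−α))^n Γ(nα + 1)/Γ(n + 1). Equivalently, ∫_{t < t_{n−1} < ⋯ < t₀ < ∞} ∏_{i=0}^{n−1}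 (t_i − t_{i+1})^{−α} t_i^{−1} dt₀ ⋯ dt_{n−1} = (Γ(1−α)^n Γ(nα+1) / (α^n Γ(n+1))) t^{−nα}. -/
open MeasureTheory Set Finset

/-- Extend a vector `s = (t₀, …, t_{n-1})` by setting `t_n = t` (and `t` beyond). -/
noncomputable def tExt (n : ℕ) (t : ℝ) (s : Fin n → ℝ) (i : ℕ) : ℝ :=
  if h : i < n then s ⟨i, h⟩ else t

/-!
Splitting off the coordinate `t_{n-1}` nearest to `t`, Tonelli gives the recursion
`I_{n+1}(t) = ∫_t^∞ I_n(x) (x - t)^{-α} x^{-1} dx` for the integral `I_n(t)` over the chain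
`t < t_{n-1} < ⋯ < t₀`. If `I_n(x) = c_n x^{-nα}`, the substitution `x = t / u` turns the
right-hand side into a Beta integral, `B((n+1)α, 1-α) c_n t^{-(n+1)α}`, and the product of these
Beta values telescopes, through `Γ(z + 1) = z Γ(z)`, to `c_n = Γ(1-α)^n Γ(nα+1) / (α^n Γ(n+1))`.
The density identity follows by pulling the constant `r^{[n]} g(t) (Cα)^n` out of the integral.
-/

open ProbabilityTheory

lemma lintegral_Ioo_rpow_mul_one_sub_rpow {a b : ℝ} (ha : 0 < a) (hb : 0 < b) :
    ∫⁻ u in Ioo 0 1, ENNReal.ofReal (u ^ (a - 1) * (1 - u) ^ (b - 1))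
      = ENNReal.ofReal (beta a b) := by
  have hβ := beta_pos ha hb
  have hpdf := lintegral_betaPDF_eq_one ha hb
  rw [lintegral_betaPDF] at hpdf
  calc ∫⁻ u in Ioo 0 1, ENNReal.ofReal (u ^ (a - 1) * (1 - u) ^ (b - 1))
      = ∫⁻ u in Ioo 0 1, ENNReal.ofReal (beta a b)
          * ENNReal.ofReal (1 / beta a b * u ^ (a - 1) * (1 - u) ^ (b - 1)) := by
        congr! 2 with u
        rw [← ENNReal.ofReal_mul hβ.le]
        field_simp
    _ = ENNReal.ofReal (beta a b) := by
        rw [lintegral_const_mul' _ _ ENNReal.ofReal_ne_top, hpdf, mul_one]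

lemma image_const_div_Ioo_zero_one {s : ℝ} (hs : 0 < s) :
    (fun u : ℝ => s / u) '' Ioo 0 1 = Ioi s := by
  ext x
  constructor
  · rintro ⟨u, ⟨hu0, hu1⟩, rfl⟩
    exact (lt_div_iff₀ hu0).2 (by nlinarith)
  · intro hx
    have hx0 : 0 < x := hs.trans hx
    exact ⟨s / x, ⟨by positivity, (div_lt_one hx0).2 hx⟩, by field_simp⟩

lemma const_div_sq_mul_sub_rpow_mul_rpow {a b s u : ℝ} (hs : 0 < s) (hu : 0 < u) (hu1 : u < 1) :
    s / u ^ 2 * ((s / u - s) ^ (b - 1) * (s / u) ^ (-(a + b)))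
      = s ^ (-a) * (u ^ (a - 1) * (1 - u) ^ (b - 1)) := by
  have h1u : 0 < 1 - u := by linarith
  rw [show s / u - s = s * (1 - u) / u by field_simp, Real.div_rpow (by positivity) hu.le,
    Real.mul_rpow hs.le h1u.le, Real.div_rpow hs.le hu.le, Real.rpow_neg hs.le,
    Real.rpow_neg hu.le, Real.rpow_add hs, Real.rpow_add hu, Real.rpow_sub_one hs.ne',
    Real.rpow_sub_one hu.ne', Real.rpow_sub_one hu.ne', Real.rpow_neg hs.le]
  have : 0 < s ^ a := by positivity
  have : 0 < s ^ b := by positivity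
  have : 0 < u ^ a := by positivity
  have : 0 < u ^ b := by positivity
  have : 0 < (1 - u) ^ (b - 1) := by positivity
  field_simp

lemma lintegral_Ioi_sub_rpow_mul_rpow {a b s : ℝ} (ha : 0 < a) (hb : 0 < b) (hs : 0 < s) :
    ∫⁻ x in Ioi s, ENNReal.ofReal ((x - s) ^ (b - 1) * x ^ (-(a + b)))
      = ENNReal.ofReal (beta a b * s ^ (-a)) := by
  have hderiv : ∀ u ∈ Ioo (0 : ℝ) 1,
      HasDerivWithinAt (fun u => s / u) (-(s / u ^ 2)) (Ioo 0 1) u := fun u hu => by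
      simpa [div_eq_mul_inv] using ((hasDerivAt_inv hu.1.ne').const_mul s).hasDerivWithinAt
  have hinj : InjOn (fun u : ℝ => s / u) (Ioo 0 1) := fun _ _ _ _ huv =>
    inv_injective (mul_right_injective₀ hs.ne' (by simpa only [div_eq_mul_inv] using huv))
  rw [← image_const_div_Ioo_zero_one hs,
    lintegral_image_eq_lintegral_abs_deriv_mul measurableSet_Ioo hderiv hinj]
  calc ∫⁻ u in Ioo 0 1, ENNReal.ofReal |-(s / u ^ 2)|
        * ENNReal.ofReal ((s / u - s) ^ (b - 1) * (s / u) ^ (-(a + b)))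
      = ∫⁻ u in Ioo 0 1, ENNReal.ofReal (s ^ (-a))
          * ENNReal.ofReal (u ^ (a - 1) * (1 - u) ^ (b - 1)) := by
        refine setLIntegral_congr_fun measurableSet_Ioo fun u ⟨hu0, hu1⟩ => ?_
        rw [abs_neg, abs_of_pos (by positivity), ← ENNReal.ofReal_mul (by positivity),
          ← ENNReal.ofReal_mul (by positivity), const_div_sq_mul_sub_rpow_mul_rpow hs hu0 hu1]
    _ = ENNReal.ofReal (beta a b * s ^ (-a)) := by
        rw [lintegral_const_mul' _ _ ENNReal.ofReal_ne_top,
          lintegral_Ioo_rpow_mul_one_sub_rpow ha hb, ← ENNReal.ofReal_mul (by positivity),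
          mul_comm]

noncomputable section

def chainRegion (n : ℕ) (t : ℝ) : Set (Fin n → ℝ) :=
  {s | ∀ i < n, tExt n t s (i + 1) < tExt n t s i}

def chainDensity (α : ℝ) (n : ℕ) (t : ℝ) (s : Fin n → ℝ) : ℝ :=
  ∏ i ∈ range n, (tExt n t s i - tExt n t s (i + 1)) ^ (-α) * (tExt n t s i)⁻¹

def chainConst (α : ℝ) (n : ℕ) : ℝ :=
  Real.Gamma (1 - α) ^ n * Real.Gamma (n * α + 1) / (α ^ n * Real.Gamma (n + 1))

end

section tExt

variable {n : ℕ} {t : ℝ}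

lemma tExt_of_le (s : Fin n → ℝ) {i : ℕ} (h : n ≤ i) : tExt n t s i = t :=
  dif_neg h.not_gt

@[fun_prop]
lemma measurable_tExt (n : ℕ) (t : ℝ) (i : ℕ) :
    Measurable fun s : Fin n → ℝ => tExt n t s i := by
  unfold tExt
  split_ifs <;> fun_prop

lemma tExt_insertNth_last (x : ℝ) (y : Fin n → ℝ) {j : ℕ} (hj : j ≤ n) :
    tExt (n + 1) t (Fin.insertNth (Fin.last n) x y) j = tExt n x y j := by
  obtain hj | rfl := hj.lt_or_eq
  · rw [tExt, tExt, dif_pos (by omega), dif_pos hj,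
      show (⟨j, _⟩ : Fin (n + 1)) = Fin.castSucc ⟨j, hj⟩ from rfl, ← Fin.succAbove_last,
      Fin.insertNth_apply_succAbove]
  · rw [tExt, tExt, dif_pos j.lt_add_one, dif_neg (lt_irrefl j),
      show (⟨j, _⟩ : Fin (j + 1)) = Fin.last j from rfl, Fin.insertNth_apply_same]

end tExt

section chain

variable {α t : ℝ} {n : ℕ}

lemma measurableSet_chainRegion (n : ℕ) (t : ℝ) : MeasurableSet (chainRegion n t) := by
  have : chainRegion n t = ⋂ i ∈ {i | i < n}, {s | tExt n t s (i + 1) < tExt n t s i} := by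
    ext; simp [chainRegion]
  rw [this]
  exact .biInter (to_countable _) fun i _ => measurableSet_lt (by fun_prop) (by fun_prop)

@[fun_prop]
lemma measurable_chainDensity (α : ℝ) (n : ℕ) (t : ℝ) : Measurable (chainDensity α n t) := by
  unfold chainDensity
  fun_prop

lemma le_tExt_of_mem_chainRegion {s : Fin n → ℝ} (hs : s ∈ chainRegion n t) (i : ℕ) :
    t ≤ tExt n t s i := by
  obtain hi | hi := le_or_gt n i
  · rw [tExt_of_le s hi]
  · refine Nat.decreasingInduction (motive := fun i _ => t ≤ tExt n t s i)
      (fun k hk ih => ih.trans (hs k hk).le) ?_ hi.le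
    rw [tExt_of_le s le_rfl]

lemma chainDensity_nonneg (ht : 0 < t) {s : Fin n → ℝ} (hs : s ∈ chainRegion n t) :
    0 ≤ chainDensity α n t s :=
  prod_nonneg fun i hi => mul_nonneg
    (Real.rpow_nonneg (sub_nonneg.2 (hs i (mem_range.1 hi)).le) _)
    (inv_nonneg.2 (ht.le.trans (le_tExt_of_mem_chainRegion hs i)))

lemma insertNth_last_mem_chainRegion_iff {x : ℝ} {y : Fin n → ℝ} :
    Fin.insertNth (Fin.last n) x y ∈ chainRegion (n + 1) t ↔ t < x ∧ y ∈ chainRegion n x := by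
  simp only [chainRegion, mem_ofPred_eq, Nat.forall_lt_succ_right]
  rw [tExt_of_le (n := n + 1) _ le_rfl, tExt_insertNth_last x y le_rfl, tExt_of_le y le_rfl,
    and_comm]
  refine and_congr_right' (forall₂_congr fun m hm => ?_)
  rw [tExt_insertNth_last x y hm, tExt_insertNth_last x y hm.le]

lemma chainDensity_insertNth_last (x : ℝ) (y : Fin n → ℝ) :
    chainDensity α (n + 1) t (Fin.insertNth (Fin.last n) x y)
      = chainDensity α n x y * ((x - t) ^ (-α) * x⁻¹) := by
  rw [chainDensity, prod_range_succ, tExt_insertNth_last x y le_rfl,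
    tExt_of_le (n := n + 1) _ le_rfl, tExt_of_le y le_rfl]
  congr 1
  refine prod_congr rfl fun i hi => ?_
  have hi := mem_range.1 hi
  rw [tExt_insertNth_last x y hi.le, tExt_insertNth_last x y hi]

lemma indicator_chainDensity_insertNth_last (ht : 0 ≤ t) (x : ℝ) (y : Fin n → ℝ) :
    (chainRegion (n + 1) t).indicator (fun s => ENNReal.ofReal (chainDensity α (n + 1) t s))
        (Fin.insertNth (Fin.last n) x y)
      = (chainRegion n x).indicator (fun y => ENNReal.ofReal (chainDensity α n x y)) y
          * (Ioi t).indicator (fun x => ENNReal.ofReal ((x - t) ^ (-α) * x⁻¹)) x := by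
  by_cases hx : t < x
  · by_cases hy : y ∈ chainRegion n x
    · have hq : 0 ≤ (x - t) ^ (-α) * x⁻¹ :=
        mul_nonneg (Real.rpow_nonneg (by linarith) _) (inv_nonneg.2 (by linarith))
      rw [indicator_of_mem (insertNth_last_mem_chainRegion_iff.2 ⟨hx, hy⟩),
        indicator_of_mem (Set.mem_Ioi.2 hx), indicator_of_mem hy, chainDensity_insertNth_last,
        ENNReal.ofReal_mul' hq]
    · rw [indicator_of_notMem (mt insertNth_last_mem_chainRegion_iff.1 (by tauto)),
        indicator_of_notMem hy, zero_mul]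
  · rw [indicator_of_notMem (mt insertNth_last_mem_chainRegion_iff.1 (by tauto)),
      indicator_of_notMem (show x ∉ Ioi t from hx), mul_zero]

lemma lintegral_chainDensity_succ (ht : 0 ≤ t) :
    ∫⁻ s in chainRegion (n + 1) t, ENNReal.ofReal (chainDensity α (n + 1) t s)
      = ∫⁻ x in Ioi t, (∫⁻ y in chainRegion n x, ENNReal.ofReal (chainDensity α n x y))
          * ENNReal.ofReal ((x - t) ^ (-α) * x⁻¹) := by
  let e := (MeasurableEquiv.piFinSuccAbove (fun _ : Fin (n + 1) => ℝ) (Fin.last n)).symm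
  have he : MeasurePreserving e (volume.prod volume) volume := by
    rw [← Measure.volume_eq_prod]; exact (volume_preserving_piFinSuccAbove _ _).symm _
  have hF : Measurable fun z => (chainRegion (n + 1) t).indicator
      (fun s => ENNReal.ofReal (chainDensity α (n + 1) t s)) (e z) :=
    ((measurable_chainDensity α _ t).ennreal_ofReal.indicator
      (measurableSet_chainRegion _ t)).comp e.measurable
  rw [← lintegral_indicator (measurableSet_chainRegion _ _),
    ← he.lintegral_comp_emb e.measurableEmbedding, lintegral_prod _ hF.aemeasurable,
    ← lintegral_indicator measurableSet_Ioi]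
  refine lintegral_congr fun x => ?_
  simp only [e, MeasurableEquiv.piFinSuccAbove_symm_apply, Fin.insertNthEquiv, Equiv.coe_fn_mk,
    indicator_chainDensity_insertNth_last ht,
    lintegral_mul_const _ ((measurable_chainDensity α n x).ennreal_ofReal.indicator
      (measurableSet_chainRegion n x)),
    lintegral_indicator (measurableSet_chainRegion n x)]
  exact (indicator_mul_right _
    (fun x => ∫⁻ y in chainRegion n x, ENNReal.ofReal (chainDensity α n x y)) _).symm

lemma chainConst_nonneg (hα : 0 < α) (hα1 : α < 1) (n : ℕ) : 0 ≤ chainConst α n := by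
  have := Real.Gamma_pos_of_pos (sub_pos.2 hα1)
  have := Real.Gamma_pos_of_pos (by positivity : 0 < (n : ℝ) * α + 1)
  have := Real.Gamma_pos_of_pos (by positivity : 0 < (n : ℝ) + 1)
  unfold chainConst
  positivity

lemma chainConst_succ (hα : 0 < α) (n : ℕ) :
    chainConst α (n + 1) = chainConst α n * beta ((n + 1) * α) (1 - α) := by
  have hΓ : Real.Gamma (n * α + 1) ≠ 0 := (Real.Gamma_pos_of_pos (by positivity)).ne'
  have hΓ' : Real.Gamma (n + 1) ≠ 0 := (Real.Gamma_pos_of_pos (by positivity)).ne'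
  rw [chainConst, chainConst, beta, show (n + 1) * α + (1 - α) = n * α + 1 by ring]
  push_cast
  rw [Real.Gamma_add_one (by positivity : ((n : ℝ) + 1) * α ≠ 0),
    Real.Gamma_add_one (by positivity : (n : ℝ) + 1 ≠ 0)]
  field_simp
  ring

lemma lintegral_chainDensity (hα : 0 < α) (hα1 : α < 1) (n : ℕ) {t : ℝ} (ht : 0 < t) :
    ∫⁻ s in chainRegion n t, ENNReal.ofReal (chainDensity α n t s)
      = ENNReal.ofReal (chainConst α n * t ^ (-(n * α))) := by
  induction n generalizing t with
  | zero =>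
    have : chainRegion 0 t = univ := by ext; simp [chainRegion]
    simp [this, chainDensity, chainConst, volume_pi]
  | succ n ih =>
    have hc := chainConst_nonneg hα hα1 n
    rw [lintegral_chainDensity_succ ht.le]
    calc ∫⁻ x in Ioi t, (∫⁻ y in chainRegion n x, ENNReal.ofReal (chainDensity α n x y))
          * ENNReal.ofReal ((x - t) ^ (-α) * x⁻¹)
        = ∫⁻ x in Ioi t, ENNReal.ofReal (chainConst α n)
            * ENNReal.ofReal ((x - t) ^ ((1 - α) - 1) * x ^ (-((n + 1) * α + (1 - α)))) := by
          refine setLIntegral_congr_fun measurableSet_Ioi fun x hx => ?_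
          have hx0 : 0 < x := ht.trans hx
          rw [ih hx0, ← ENNReal.ofReal_mul (by positivity), ← ENNReal.ofReal_mul hc,
            show -((n + 1) * α + (1 - α)) = -(n * α) + -1 by ring, sub_sub_cancel_left,
            Real.rpow_add hx0, Real.rpow_neg_one]
          ring_nf
      _ = ENNReal.ofReal (chainConst α n)
            * ENNReal.ofReal (beta ((n + 1) * α) (1 - α) * t ^ (-((n + 1) * α))) := by
          rw [lintegral_const_mul' _ _ ENNReal.ofReal_ne_top,
            lintegral_Ioi_sub_rpow_mul_rpow (by positivity) (by linarith) ht]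
      _ = ENNReal.ofReal (chainConst α (n + 1) * t ^ (-((n + 1 : ℕ) * α))) := by
          rw [← ENNReal.ofReal_mul hc, chainConst_succ hα]
          push_cast
          ring_nf

lemma integral_chainDensity (hα : 0 < α) (hα1 : α < 1) (n : ℕ) {t : ℝ} (ht : 0 < t) :
    ∫ s in chainRegion n t, chainDensity α n t s = chainConst α n * t ^ (-(n * α)) := by
  rw [integral_eq_lintegral_of_nonneg_ae
      (ae_restrict_of_forall_mem (measurableSet_chainRegion n t) fun s hs =>
        chainDensity_nonneg ht hs)
      (measurable_chainDensity α n t).aestronglyMeasurable,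
    lintegral_chainDensity hα hα1 n ht,
    ENNReal.toReal_ofReal (mul_nonneg (chainConst_nonneg hα hα1 n) (by positivity))]

end chain

theorem marginal_density_remaining_sum_stable_general
    (α C r : ℝ) (hα : 0 < α) (hα1 : α < 1)
    (n : ℕ)
    (g : ℝ → ℝ)
    (t : ℝ) (ht : 0 < t) :
    (∫ s in {s : Fin n → ℝ | ∀ i < n, tExt n t s (i + 1) < tExt n t s i},
        (∏ i ∈ Finset.range n, (r + i)) * g t *
          ∏ i ∈ Finset.range n,
            C * α * (tExt n t s i - tExt n t s (i + 1)) ^ (-α) * (tExt n t s i)⁻¹)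
      = (∏ i ∈ Finset.range n, (r + i)) * (C * Real.Gamma (1 - α)) ^ n
          * (Real.Gamma (n * α + 1) / Real.Gamma (n + 1)) * t ^ (-(n * α)) * g t
    ∧
    (∫ s in {s : Fin n → ℝ | ∀ i < n, tExt n t s (i + 1) < tExt n t s i},
        ∏ i ∈ Finset.range n,
          (tExt n t s i - tExt n t s (i + 1)) ^ (-α) * (tExt n t s i)⁻¹)
      = (Real.Gamma (1 - α) ^ n * Real.Gamma (n * α + 1) / (α ^ n * Real.Gamma (n + 1)))
          * t ^ (-(n * α)) := by
  have hdensity := integral_chainDensity hα hα1 n ht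
  refine ⟨?_, hdensity⟩
  have hfactor : ∀ s : Fin n → ℝ, ∏ i ∈ range n,
      C * α * (tExt n t s i - tExt n t s (i + 1)) ^ (-α) * (tExt n t s i)⁻¹
        = (C * α) ^ n * chainDensity α n t s := fun s => by
    simpa only [chainDensity, card_range, mul_assoc] using
      (pow_card_mul_prod (s := range n) (b := C * α)
        (f := fun i => (tExt n t s i - tExt n t s (i + 1)) ^ (-α) * (tExt n t s i)⁻¹)).symm
  simp_rw [hfactor, integral_const_mul, ← chainRegion.eq_1]
  rw [hdensity, chainConst]
  field_simp
  ring

/-- Proposition 4.2: integrating the joint density of the remaining sums over the region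
`t < t_{n-1} < ⋯ < t₀ < ∞` gives the marginal density `L_n t^{-nα} g(t)`; equivalently the
purely analytic integral identity for `∏ (t_i - t_{i+1})^{-α} t_i^{-1}`. -/
theorem marginal_density_remaining_sum_stable
    (α C r : ℝ) (hα : 0 < α) (hα1 : α < 1) (hC : 0 < C) (hr : 0 < r)
    (n : ℕ) (hn : 1 ≤ n)
    (g : ℝ → ℝ) (hg_meas : Measurable g) (hg_nonneg : ∀ x > (0 : ℝ), 0 ≤ g x)
    (t : ℝ) (ht : 0 < t) :
    (∫ s in {s : Fin n → ℝ | ∀ i < n, tExt n t s (i + 1) < tExt n t s i},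
        (∏ i ∈ Finset.range n, (r + i)) * g t *
          ∏ i ∈ Finset.range n,
            C * α * (tExt n t s i - tExt n t s (i + 1)) ^ (-α) * (tExt n t s i)⁻¹)
      = (∏ i ∈ Finset.range n, (r + i)) * (C * Real.Gamma (1 - α)) ^ n
          * (Real.Gamma (n * α + 1) / Real.Gamma (n + 1)) * t ^ (-(n * α)) * g t
    ∧
    (∫ s in {s : Fin n → ℝ | ∀ i < n, tExt n t s (i + 1) < tExt n t s i},
        ∏ i ∈ Finset.range n,
          (tExt n t s i - tExt n t s (i + 1)) ^ (-α) * (tExt n t s i)⁻¹)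
      = (Real.Gamma (1 - α) ^ n * Real.Gamma (n * α + 1) / (α ^ n * Real.Gamma (n + 1)))
          * t ^ (-(n * α)) :=
  marginal_density_remaining_sum_stable_general α C r hα hα1 n g t ht
end

section
/- (Corollary 4.3.) Let 0 < α < 1, C > 0, r > 0 and n ∈ ℕ with n ≥ 1. Let g : (0,∞) → [0,∞) be measurable and satisfy ∫₀^∞ e^{−λt} g(t) dt = (1 + C Γ(1−α) λ^α)^{−(r+n)} for all λ > 0. Then ∫₀^∞ t^{−nα} g(t) dt = Γ(n+1) / ( Γ(nα+1) (C Γ(1−α))^n r^{[n]} ), where r^{[n]} := r(r+1)⋯(r+n−1). -/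
/-!
Since `Γ(s) x^{-s} = ∫₀^∞ λ^{s-1} e^{-λx} dλ`, Tonelli turns the negative moment of order
`s = nα` into a Mellin integral of the Laplace transform:
`Γ(nα) ∫ t^{-nα} g = ∫₀^∞ λ^{nα-1} (1 + Kλ^α)^{-(r+n)} dλ` with `K = CΓ(1-α)`. The substitution
`y = Kλ^α` reduces the right side to `α⁻¹ K^{-n} B(n, r)`, and the same Tonelli argument, applied
to `(1 + y)^{-(n+r)}`, evaluates the Beta integral as `Γ(n)Γ(r)/Γ(n+r)`.
-/

open MeasureTheory Set Finset Real
open scoped ENNReal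

theorem lintegral_ofReal_eq_ofReal_integral_of_pos {α : Type*} [MeasurableSpace α]
    {μ : Measure α} {f : α → ℝ} (hf : 0 ≤ᵐ[μ] f) (hpos : 0 < ∫ x, f x ∂μ) :
    ∫⁻ x, ENNReal.ofReal (f x) ∂μ = ENNReal.ofReal (∫ x, f x ∂μ) :=
  (ofReal_integral_eq_lintegral_ofReal (.of_integral_ne_zero hpos.ne') hf).symm

theorem integral_eq_div_of_ofReal_mul_lintegral {α : Type*} [MeasurableSpace α] {μ : Measure α}
    {f : α → ℝ} (hf : 0 ≤ᵐ[μ] f) (hfm : AEStronglyMeasurable f μ) {c d : ℝ} (hc : 0 < c)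
    (hd : 0 ≤ d) (h : ENNReal.ofReal c * ∫⁻ x, ENNReal.ofReal (f x) ∂μ = ENNReal.ofReal d) :
    ∫ x, f x ∂μ = d / c := by
  have hc' : ENNReal.ofReal c ≠ 0 := by simpa using hc
  rw [integral_eq_lintegral_of_nonneg_ae hf hfm,
    (ENNReal.eq_div_iff hc' ENNReal.ofReal_ne_top).mpr h, ← ENNReal.ofReal_div_of_pos hc,
    ENNReal.toReal_ofReal (div_nonneg hd hc.le)]

theorem lintegral_rpow_mul_exp_neg_mul_Ioi {a r : ℝ} (ha : 0 < a) (hr : 0 < r) :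
    ∫⁻ t in Ioi 0, ENNReal.ofReal (t ^ (a - 1) * exp (-(r * t))) =
      ENNReal.ofReal (r ^ (-a) * Gamma a) := by
  have hval := integral_rpow_mul_exp_neg_mul_Ioi ha hr
  rw [one_div, inv_rpow hr.le, ← rpow_neg hr.le] at hval
  rw [lintegral_ofReal_eq_ofReal_integral_of_pos, hval]
  · filter_upwards [ae_restrict_mem measurableSet_Ioi] with t (ht : 0 < t)
    exact mul_nonneg (rpow_nonneg ht.le _) (exp_nonneg _)
  · rw [hval]; exact mul_pos (rpow_pos_of_pos hr _) (Gamma_pos_of_pos ha)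

/-- Tonelli applied to `Γ(s) (c + x)^{-s} = ∫₀^∞ λ^{s-1} e^{-cλ} e^{-λx} dλ`. -/
theorem ofReal_Gamma_mul_lintegral_add_rpow_neg {s c : ℝ} (hs : 0 < s) (hc : 0 ≤ c)
    {F : ℝ → ℝ≥0∞} (hF : Measurable F) :
    ENNReal.ofReal (Gamma s) * ∫⁻ x in Ioi 0, ENNReal.ofReal ((c + x) ^ (-s)) * F x =
      ∫⁻ l in Ioi 0, ENNReal.ofReal (l ^ (s - 1) * exp (-(c * l))) *
        ∫⁻ x in Ioi 0, ENNReal.ofReal (exp (-l * x)) * F x := by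
  calc ENNReal.ofReal (Gamma s) * ∫⁻ x in Ioi 0, ENNReal.ofReal ((c + x) ^ (-s)) * F x
      = ∫⁻ x in Ioi 0, ∫⁻ l in Ioi 0, ENNReal.ofReal (l ^ (s - 1) * exp (-(c * l))) *
          (ENNReal.ofReal (exp (-l * x)) * F x) := by
        rw [← lintegral_const_mul _ (by fun_prop)]
        refine setLIntegral_congr_fun measurableSet_Ioi fun x hx => ?_
        have hcx : 0 < c + x := by linarith [mem_Ioi.mp hx]
        have hsplit : ∀ l, ENNReal.ofReal (l ^ (s - 1) * exp (-(c * l))) *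
            (ENNReal.ofReal (exp (-l * x)) * F x) =
              ENNReal.ofReal (l ^ (s - 1) * exp (-((c + x) * l))) * F x := by
          intro l
          rw [← mul_assoc, ← ENNReal.ofReal_mul' (exp_nonneg _), mul_assoc, ← exp_add]
          ring_nf
        simp_rw [hsplit]
        rw [lintegral_mul_const _ (by fun_prop), lintegral_rpow_mul_exp_neg_mul_Ioi hs hcx,
          ENNReal.ofReal_mul (rpow_nonneg hcx.le _)]
        ring
    _ = ∫⁻ l in Ioi 0, ∫⁻ x in Ioi 0, ENNReal.ofReal (l ^ (s - 1) * exp (-(c * l))) *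
          (ENNReal.ofReal (exp (-l * x)) * F x) :=
        lintegral_lintegral_swap (by fun_prop)
    _ = _ := lintegral_congr fun l => lintegral_const_mul _ (by fun_prop)

theorem integral_rpow_mul_one_add_rpow_neg_Ioi {a b : ℝ} (ha : 0 < a) (hb : 0 < b) :
    ∫ y in Ioi 0, y ^ (a - 1) * (1 + y) ^ (-(a + b)) = Gamma a * Gamma b / Gamma (a + b) := by
  have hΓa := Gamma_pos_of_pos ha
  have hΓb := Gamma_pos_of_pos hb
  refine integral_eq_div_of_ofReal_mul_lintegral ?_ (by fun_prop)
    (Gamma_pos_of_pos (add_pos ha hb)) (by positivity) ?_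
  · filter_upwards [ae_restrict_mem measurableSet_Ioi] with y (hy : 0 < y)
    positivity
  have hlaplace : ∀ l ∈ Ioi (0 : ℝ), ∫⁻ x in Ioi 0,
      ENNReal.ofReal (exp (-l * x)) * ENNReal.ofReal (x ^ (a - 1)) =
        ENNReal.ofReal (l ^ (-a) * Gamma a) := fun l hl => by
    rw [← lintegral_rpow_mul_exp_neg_mul_Ioi ha hl]
    refine lintegral_congr fun x => ?_
    rw [← ENNReal.ofReal_mul (exp_nonneg _), mul_comm, neg_mul]
  calc ENNReal.ofReal (Gamma (a + b)) *
        ∫⁻ y in Ioi 0, ENNReal.ofReal (y ^ (a - 1) * (1 + y) ^ (-(a + b)))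
      = ENNReal.ofReal (Gamma (a + b)) *
        ∫⁻ y in Ioi 0,
          ENNReal.ofReal ((1 + y) ^ (-(a + b))) * ENNReal.ofReal (y ^ (a - 1)) := by
        congr 1
        refine setLIntegral_congr_fun measurableSet_Ioi fun y (hy : 0 < y) => ?_
        rw [mul_comm, ENNReal.ofReal_mul (by positivity)]
    _ = ∫⁻ l in Ioi 0, ENNReal.ofReal (l ^ (a + b - 1) * exp (-(1 * l))) *
          ENNReal.ofReal (l ^ (-a) * Gamma a) := by
        rw [ofReal_Gamma_mul_lintegral_add_rpow_neg (add_pos ha hb) zero_le_one (by fun_prop)]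
        refine setLIntegral_congr_fun measurableSet_Ioi fun l hl => ?_
        rw [hlaplace l hl]
    _ = ∫⁻ l in Ioi 0,
          ENNReal.ofReal (l ^ (b - 1) * exp (-(1 * l))) * ENNReal.ofReal (Gamma a) := by
        refine setLIntegral_congr_fun measurableSet_Ioi fun l (hl : 0 < l) => ?_
        have hpow : l ^ (a + b - 1) * l ^ (-a) = l ^ (b - 1) := by
          rw [← rpow_add hl]; ring_nf
        rw [← ENNReal.ofReal_mul (by positivity), ← ENNReal.ofReal_mul (by positivity)]
        congr 1
        linear_combination (exp (-(1 * l)) * Gamma a) * hpow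
    _ = ENNReal.ofReal (Gamma a * Gamma b) := by
        rw [lintegral_mul_const _ (by fun_prop), lintegral_rpow_mul_exp_neg_mul_Ioi hb one_pos,
          one_rpow, one_mul, ← ENNReal.ofReal_mul hΓb.le, mul_comm]

theorem integral_rpow_mul_one_add_mul_rpow_neg_Ioi {α K a b : ℝ} (hα : 0 < α) (hK : 0 < K)
    (ha : 0 < a) (hb : 0 < b) :
    ∫ l in Ioi 0, l ^ (a * α - 1) * (1 + K * l ^ α) ^ (-(a + b)) =
      Gamma a * Gamma b / (α * K ^ a * Gamma (a + b)) := by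
  have hpower : ∫ l in Ioi 0, l ^ (a * α - 1) * (1 + K * l ^ α) ^ (-(a + b)) =
      α⁻¹ * ∫ y in Ioi 0, y ^ (a - 1) * (1 + K * y) ^ (-(a + b)) := by
    rw [← integral_comp_rpow_Ioi_of_pos
      (g := fun y => y ^ (a - 1) * (1 + K * y) ^ (-(a + b))) hα, ← integral_const_mul]
    refine setIntegral_congr_fun measurableSet_Ioi fun l (hl : 0 < l) => ?_
    have hpow : l ^ (α - 1) * (l ^ α) ^ (a - 1) = l ^ (a * α - 1) := by
      rw [← rpow_mul hl.le, ← rpow_add hl]; ring_nf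
    rw [smul_eq_mul, ← hpow]
    field_simp
  have hscale : ∫ y in Ioi 0, y ^ (a - 1) * (1 + K * y) ^ (-(a + b)) =
      K ^ (-a) * ∫ z in Ioi 0, z ^ (a - 1) * (1 + z) ^ (-(a + b)) := by
    have h := integral_comp_mul_left_Ioi (fun z => z ^ (a - 1) * (1 + z) ^ (-(a + b))) 0 hK
    rw [mul_zero, smul_eq_mul, eq_inv_mul_iff_mul_eq₀ hK.ne'] at h
    rw [← h, ← mul_assoc, ← integral_const_mul]
    refine setIntegral_congr_fun measurableSet_Ioi fun y (hy : 0 < y) => ?_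
    have hpow : K ^ (-a) * K * (K * y) ^ (a - 1) = y ^ (a - 1) := by
      rw [mul_rpow hK.le hy.le, ← mul_assoc, mul_assoc (K ^ (-a)),
        ← rpow_one_add' hK.le (by linarith), ← rpow_add hK, show -a + (1 + (a - 1)) = 0 by ring,
        rpow_zero, one_mul]
    rw [← hpow]; ring
  rw [hpower, hscale, integral_rpow_mul_one_add_rpow_neg_Ioi ha hb, rpow_neg hK.le]
  field_simp

theorem Gamma_add_nat_eq_prod_mul {r : ℝ} (hr : 0 < r) (n : ℕ) :
    Gamma (r + n) = (∏ i ∈ range n, (r + i)) * Gamma r := by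
  induction n with
  | zero => simp
  | succ n ih =>
    rw [Nat.cast_succ, ← add_assoc, Gamma_add_one (by positivity), ih, prod_range_succ]
    ring

theorem integral_rpow_neg_mul_eq_of_laplace {g L : ℝ → ℝ} {s : ℝ} (hs : 0 < s)
    (hg : Measurable g) (hg_nonneg : ∀ x > 0, 0 ≤ g x)
    (hL : ∀ l > 0, ∫ x in Ioi 0, exp (-l * x) * g x = L l) (hL_pos : ∀ l > 0, 0 < L l)
    (hmoment : 0 < ∫ l in Ioi 0, l ^ (s - 1) * L l) :
    ∫ x in Ioi 0, x ^ (-s) * g x = (∫ l in Ioi 0, l ^ (s - 1) * L l) / Gamma s := by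
  refine integral_eq_div_of_ofReal_mul_lintegral ?_ (by fun_prop) (Gamma_pos_of_pos hs)
    hmoment.le ?_
  · filter_upwards [ae_restrict_mem measurableSet_Ioi] with x (hx : 0 < x)
    exact mul_nonneg (rpow_nonneg hx.le _) (hg_nonneg x hx)
  have hlaplace : ∀ l ∈ Ioi (0 : ℝ),
      ∫⁻ x in Ioi 0, ENNReal.ofReal (exp (-l * x)) * ENNReal.ofReal (g x) =
        ENNReal.ofReal (L l) := fun l hl => by
    simp_rw [← ENNReal.ofReal_mul (exp_nonneg _)]
    rw [lintegral_ofReal_eq_ofReal_integral_of_pos, hL l hl]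
    · filter_upwards [ae_restrict_mem measurableSet_Ioi] with x (hx : 0 < x)
      exact mul_nonneg (exp_nonneg _) (hg_nonneg x hx)
    · rw [hL l hl]; exact hL_pos l hl
  have hmellin := ofReal_Gamma_mul_lintegral_add_rpow_neg hs le_rfl hg.ennreal_ofReal
  simp only [zero_add, zero_mul, neg_zero, exp_zero, mul_one] at hmellin
  calc ENNReal.ofReal (Gamma s) * ∫⁻ x in Ioi 0, ENNReal.ofReal (x ^ (-s) * g x)
      = ENNReal.ofReal (Gamma s) *
          ∫⁻ x in Ioi 0, ENNReal.ofReal (x ^ (-s)) * ENNReal.ofReal (g x) := by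
        congr 1
        refine setLIntegral_congr_fun measurableSet_Ioi fun x (hx : 0 < x) => ?_
        rw [ENNReal.ofReal_mul (rpow_nonneg hx.le _)]
    _ = ∫⁻ l in Ioi 0, ENNReal.ofReal (l ^ (s - 1) * L l) := by
        rw [hmellin]
        refine setLIntegral_congr_fun measurableSet_Ioi fun l (hl : 0 < l) => ?_
        rw [hlaplace l hl, ENNReal.ofReal_mul (rpow_nonneg hl.le _)]
    _ = ENNReal.ofReal (∫ l in Ioi 0, l ^ (s - 1) * L l) := by
        refine lintegral_ofReal_eq_ofReal_integral_of_pos ?_ hmoment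
        filter_upwards [ae_restrict_mem measurableSet_Ioi] with l (hl : 0 < l)
        exact mul_nonneg (rpow_nonneg hl.le _) (hL_pos l hl).le

/-- Corollary 4.3: if `g` has Laplace transform `(1 + CΓ(1-α)λ^α)^{-(r+n)}`, then
`∫₀^∞ t^{-nα} g(t) dt = Γ(n+1)/(Γ(nα+1)(CΓ(1-α))^n r^{[n]})`. -/
theorem negative_moment_of_negBinomial_stable_sum
    (α C r : ℝ) (hα : 0 < α) (hα1 : α < 1) (hC : 0 < C) (hr : 0 < r)
    (n : ℕ) (hn : 1 ≤ n)
    (g : ℝ → ℝ) (hg_meas : Measurable g) (hg_nonneg : ∀ x > (0 : ℝ), 0 ≤ g x)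
    (hg_laplace : ∀ l > (0 : ℝ),
      ∫ x in Ioi (0 : ℝ), Real.exp (-l * x) * g x
        = (1 + C * Real.Gamma (1 - α) * l ^ α) ^ (-(r + n))) :
    ∫ x in Ioi (0 : ℝ), x ^ (-(n * α)) * g x
      = Real.Gamma (n + 1)
        / (Real.Gamma (n * α + 1) * (C * Real.Gamma (1 - α)) ^ n
            * ∏ i ∈ Finset.range n, (r + i)) := by
  have hK : 0 < C * Gamma (1 - α) := mul_pos hC (Gamma_pos_of_pos (by linarith))
  have hn0 : (0 : ℝ) < n := by exact_mod_cast hn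
  have hmoment := integral_rpow_mul_one_add_mul_rpow_neg_Ioi hα hK hn0 hr
  rw [add_comm (n : ℝ) r, Gamma_add_nat_eq_prod_mul hr, rpow_natCast] at hmoment
  have hlaplace_pos : ∀ l > (0 : ℝ), 0 < (1 + C * Gamma (1 - α) * l ^ α) ^ (-(r + n)) :=
    fun l hl => rpow_pos_of_pos (by positivity) _
  rw [integral_rpow_neg_mul_eq_of_laplace (mul_pos hn0 hα) hg_meas hg_nonneg hg_laplace
      hlaplace_pos (by rw [hmoment]; positivity), hmoment,
    Gamma_add_one (mul_pos hn0 hα).ne', Gamma_add_one hn0.ne']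
  field_simp
end

section
/- (Change of measure for shifted exponential partial sums.) Let (E_i)_{i≥1} be i.i.d. exponential random variables with mean 1 and Γ_n := Σ_{i=1}^n E_i. Then for every r ∈ ℕ and every measurable function f : (0,∞)^ℕ → [0,∞], E[ f(Γ_{r+1}, Γ_{r+2}, Γ_{r+3}, …) ] = E[ (Γ₁^r / r!) f(Γ₁, Γ₂, Γ₃, …) ]. -/
open MeasureTheory Set Finset ProbabilityTheory
open scoped ENNReal

/-!
Writing `Γ_{m+n} = Γ_m + (E_m + ⋯ + E_{m+n-1})`, the sequence `(Γ_{r+1+n})_n` is a fixed function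
`Φ` of `Γ_{r+1}` and of the shifted sequence `(E_{r+1+k})_k`, and `(Γ_{1+n})_n` is the same `Φ`
of `Γ_1` and `(E_{1+k})_k`. In both cases the two arguments are independent, the shifted sequence
has the law `ν = Exp(1)^ℕ`, and the first argument has law `Gamma(r+1, 1)` resp. `Exp(1)` (the
gamma law arises by repeatedly convolving with the exponential density). As `Gamma(r+1, 1)` has
density `x^r / r!` with respect to `Exp(1)`, both sides equal
`∫ x^r / r! · f (Φ (x, y)) d(Exp(1) ⊗ ν)`.
-/

namespace ProbabilityTheory

open Real

@[fun_prop]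
lemma measurable_gammaPDF (a r : ℝ) : Measurable (gammaPDF a r) :=
  (measurable_gammaPDFReal a r).ennreal_ofReal

section Gamma

variable {a r : ℝ}

lemma gammaPDF_mul_exponentialPDF_sub_of_mem_Icc (hr : 0 < r) {s y : ℝ} (hy : y ∈ Icc 0 s) :
    gammaPDF a r y * exponentialPDF r (-y + s)
      = ENNReal.ofReal (r ^ (a + 1) / Gamma a * exp (-(r * s)) * y ^ (a - 1)) := by
  rw [gammaPDF_of_nonneg hy.1, exponentialPDF_of_nonneg (by linarith [hy.2]),
    ← ENNReal.ofReal_mul' (by positivity), rpow_add_one hr.ne']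
  congr 1
  have : exp (-(r * y)) * exp (-(r * (-y + s))) = exp (-(r * s)) := by
    rw [← exp_add]; ring_nf
  linear_combination r ^ a / Gamma a * y ^ (a - 1) * r * this

lemma gammaPDF_mul_exponentialPDF_sub_of_notMem_Icc {s y : ℝ} (hy : y ∉ Icc 0 s) :
    gammaPDF a r y * exponentialPDF r (-y + s) = 0 := by
  rcases lt_or_ge y 0 with hy' | hy'
  · rw [gammaPDF_of_neg hy', zero_mul]
  · rw [exponentialPDF_of_neg (by simp_all), mul_zero]

lemma integral_Icc_rpow_sub_one (ha : 0 < a) {s : ℝ} (hs : 0 ≤ s) :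
    ∫ y in Icc 0 s, y ^ (a - 1) = s ^ a / a := by
  rw [integral_Icc_eq_integral_Ioc, ← intervalIntegral.integral_of_le hs,
    integral_rpow (by left; linarith), sub_add_cancel, zero_rpow ha.ne', sub_zero]

lemma gammaPDF_lconvolution_exponentialPDF (ha : 0 < a) (hr : 0 < r) :
    gammaPDF a r ⋆ₗ exponentialPDF r = gammaPDF (a + 1) r := by
  ext s
  rw [lconvolution_def]
  rcases lt_or_ge s 0 with hs | hs
  · have hnot (y : ℝ) : y ∉ Icc 0 s := fun hy => hs.not_ge (hy.1.trans hy.2)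
    simp [gammaPDF_of_neg hs, gammaPDF_mul_exponentialPDF_sub_of_notMem_Icc (hnot _)]
  have hint : IntegrableOn (fun y : ℝ => y ^ (a - 1)) (Icc 0 s) := by
    rw [integrableOn_Icc_iff_integrableOn_Ioc, ← intervalIntegrable_iff_integrableOn_Ioc_of_le hs]
    exact intervalIntegral.intervalIntegrable_rpow' (by linarith)
  set C := r ^ (a + 1) / Gamma a * exp (-(r * s))
  calc ∫⁻ y, gammaPDF a r y * exponentialPDF r (-y + s)
      = ∫⁻ y in Icc 0 s, ENNReal.ofReal (C * y ^ (a - 1)) := by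
        rw [← lintegral_indicator measurableSet_Icc]
        congr 1 with y
        by_cases hy : y ∈ Icc 0 s
        · rw [indicator_of_mem hy, gammaPDF_mul_exponentialPDF_sub_of_mem_Icc hr hy]
        · rw [indicator_of_notMem hy, gammaPDF_mul_exponentialPDF_sub_of_notMem_Icc hy]
    _ = ENNReal.ofReal (C * (s ^ a / a)) := by
        rw [← integral_Icc_rpow_sub_one ha hs, ← integral_const_mul,
          ofReal_integral_eq_lintegral_ofReal (hint.const_mul C)]
        refine (ae_restrict_iff' measurableSet_Icc).mpr (ae_of_all _ fun y hy => ?_)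
        have := hy.1
        positivity
    _ = gammaPDF (a + 1) r s := by
        have := (Gamma_pos_of_pos ha).ne'
        rw [gammaPDF_of_nonneg hs, Gamma_add_one ha.ne', add_sub_cancel_right]
        congr 1
        simp only [C]
        field_simp

lemma gammaMeasure_conv_expMeasure (ha : 0 < a) (hr : 0 < r) :
    gammaMeasure a r ∗ expMeasure r = gammaMeasure (a + 1) r := by
  change volume.withDensity (gammaPDF a r) ∗ volume.withDensity (exponentialPDF r) = _
  rw [conv_withDensity_eq_lconvolution (f := gammaPDF a r) (g := exponentialPDF r)
    (measurable_gammaPDF a r) (measurable_gammaPDF 1 r),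
    gammaPDF_lconvolution_exponentialPDF ha hr, gammaMeasure]

lemma gammaMeasure_natCast_add_one (n : ℕ) (hr : 0 < r) :
    gammaMeasure (n + 1) r
      = (expMeasure r).withDensity fun x => ENNReal.ofReal ((r * x) ^ n / n.factorial) := by
  rw [expMeasure, gammaMeasure, gammaMeasure, ← withDensity_mul _
    (measurable_gammaPDF 1 r) (by fun_prop)]
  congr 1 with x
  rcases lt_or_ge x 0 with hx | hx
  · simp [gammaPDF_of_neg hx]
  rw [Pi.mul_apply, gammaPDF_of_nonneg hx, gammaPDF_of_nonneg hx,
    ← ENNReal.ofReal_mul (by positivity)]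
  congr 1
  rw [add_sub_cancel_right, rpow_natCast, Gamma_nat_eq_factorial, sub_self, rpow_zero, Gamma_one,
    rpow_add_one hr.ne', rpow_natCast, rpow_one]
  field_simp
  ring

end Gamma

variable {Ω : Type*} {mΩ : MeasurableSpace Ω} {P : Measure Ω}

lemma iIndepFun.indepFun_restrict_of_disjoint {ι : Type*} {β : ι → Type*}
    {m : ∀ i, MeasurableSpace (β i)} {f : ∀ i, Ω → β i} (hf : iIndepFun f P)
    (hmeas : ∀ i, Measurable (f i)) {S T : Set ι} (hST : Disjoint S T) :
    IndepFun (fun ω (i : S) => f i ω) (fun ω (i : T) => f i ω) P := by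
  rw [IndepFun_iff_Indep]
  convert indep_iSup_of_disjoint (fun i => (hmeas i).comap_le) hf.iIndep hST using 1 <;>
    simp [MeasurableSpace.pi, MeasurableSpace.comap_iSup, MeasurableSpace.comap_comp,
      iSup_subtype', Function.comp_def]

section Shift

variable {β : Type*} [MeasurableSpace β] {E : ℕ → Ω → β}

lemma iIndepFun.indepFun_sum_range_shift [AddCommMonoid β] [MeasurableAdd₂ β]
    (hE : iIndepFun E P) (hmeas : ∀ i, Measurable (E i)) (m : ℕ) :
    IndepFun (fun ω => ∑ i ∈ range m, E i ω) (fun ω n => E (m + n) ω) P := by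
  have h := (hE.indepFun_restrict_of_disjoint hmeas (Iio_disjoint_Ici le_rfl)).comp
    (φ := fun v : Set.Iio m → β => ∑ i : Fin m, v ⟨i, i.isLt⟩)
    (ψ := fun w n => w ⟨m + n, Nat.le_add_right m n⟩) (by fun_prop) (by fun_prop)
  convert h using 1
  · funext ω
    simp [Finset.sum_range]
  · rfl

lemma iIndepFun.map_shift_eq_infinitePi (hE : iIndepFun E P) (hmeas : ∀ i, Measurable (E i))
    {μ : Measure β} (hlaw : ∀ i, P.map (E i) = μ) (m : ℕ) :
    P.map (fun ω n => E (m + n) ω) = Measure.infinitePi fun _ => μ := by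
  rw [(hE.precomp (add_right_injective m)).map_fun_eq_infinitePi_map fun n => hmeas _]
  simp_rw [hlaw]

end Shift

section ExponentialSums

variable {r : ℝ} {E : ℕ → Ω → ℝ}

lemma iIndepFun.map_sum_range_eq_gammaMeasure (hE : iIndepFun E P)
    (hmeas : ∀ i, Measurable (E i)) (hlaw : ∀ i, P.map (E i) = expMeasure r) (hr : 0 < r)
    (n : ℕ) : P.map (fun ω => ∑ i ∈ range (n + 1), E i ω) = gammaMeasure (n + 1) r := by
  have := hE.isProbabilityMeasure
  induction n with
  | zero =>
    simp only [zero_add, range_one, sum_singleton, Nat.cast_zero]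
    exact hlaw 0
  | succ n ih =>
    have hind : IndepFun (fun ω => ∑ i ∈ range (n + 1), E i ω) (E (n + 1)) P := by
      simpa only [Finset.sum_fn] using hE.indepFun_sum_range_succ hmeas (n + 1)
    have hsum : (fun ω => ∑ i ∈ range (n + 1 + 1), E i ω)
        = (fun ω => ∑ i ∈ range (n + 1), E i ω) + E (n + 1) := by
      funext ω
      simp [Finset.sum_range_succ]
    rw [hsum, hind.map_add_eq_map_conv_map (by fun_prop) (hmeas _), ih, hlaw,
      gammaMeasure_conv_expMeasure (by positivity) hr]
    push_cast
    ring_nf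

lemma iIndepFun.map_sum_range_prodMk_shift (hE : iIndepFun E P)
    (hmeas : ∀ i, Measurable (E i)) (hlaw : ∀ i, P.map (E i) = expMeasure r) (hr : 0 < r)
    (n : ℕ) :
    P.map (fun ω => (∑ i ∈ range (n + 1), E i ω, fun k => E (n + 1 + k) ω))
      = (gammaMeasure (n + 1) r).prod (Measure.infinitePi fun _ => expMeasure r) := by
  have := hE.isProbabilityMeasure
  rw [(indepFun_iff_map_prod_eq_prod_map_map (by fun_prop) (by fun_prop)).mp
      (hE.indepFun_sum_range_shift hmeas (n + 1)),
    hE.map_sum_range_eq_gammaMeasure hmeas hlaw hr, hE.map_shift_eq_infinitePi hmeas hlaw]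

end ExponentialSums

end ProbabilityTheory

theorem change_of_measure_shifted_exponential_sums_general
    {Ω : Type*} [MeasurableSpace Ω] (P : Measure Ω)
    (E : ℕ → Ω → ℝ)
    (hE_meas : ∀ i, Measurable (E i))
    (hE_indep : iIndepFun E P)
    (hE_exp : ∀ i, Measure.map (E i) P = expMeasure 1)
    (G : ℕ → Ω → ℝ) (hG : ∀ n ω, G n ω = ∑ i ∈ Finset.range n, E i ω)
    (r : ℕ)
    (f : (ℕ → ℝ) → ℝ≥0∞) (hf : Measurable f) :
    ∫⁻ ω, f (fun n => G (r + n + 1) ω) ∂P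
      = ∫⁻ ω, ENNReal.ofReal (G 1 ω ^ r / r.factorial) * f (fun n => G (n + 1) ω) ∂P := by
  have := isProbabilityMeasure_expMeasure one_pos
  set ν := Measure.infinitePi fun _ : ℕ => expMeasure 1
  set w : ℝ → ℝ≥0∞ := fun x => ENNReal.ofReal (x ^ r / r.factorial)
  set F : ℝ × (ℕ → ℝ) → ℝ≥0∞ := fun p => f fun n => p.1 + ∑ i ∈ range n, p.2 i
  have hF : Measurable F := hf.comp (by fun_prop)
  have hjoint := hE_indep.map_sum_range_prodMk_shift hE_meas hE_exp one_pos
  calc ∫⁻ ω, f (fun n => G (r + n + 1) ω) ∂P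
      = ∫⁻ ω, F (∑ i ∈ range (r + 1), E i ω, fun k => E (r + 1 + k) ω) ∂P := by
        refine lintegral_congr fun ω => ?_
        simp only [F, hG]
        congr with n
        rw [add_right_comm, Finset.sum_range_add]
    _ = ∫⁻ p, F p ∂(gammaMeasure (r + 1) 1).prod ν := by
        rw [← hjoint r, lintegral_map hF (by fun_prop)]
    _ = ∫⁻ p, w p.1 * F p ∂(expMeasure 1).prod ν := by
        rw [gammaMeasure_natCast_add_one r one_pos, prod_withDensity_left (by fun_prop),
          lintegral_withDensity_eq_lintegral_mul _ (by fun_prop) hF]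
        simp only [one_mul, Pi.mul_apply, w]
    _ = ∫⁻ ω, w (∑ i ∈ range 1, E i ω)
          * F (∑ i ∈ range 1, E i ω, fun k => E (1 + k) ω) ∂P := by
        have h0 := hjoint 0
        simp only [Nat.cast_zero, zero_add] at h0
        rw [expMeasure, ← h0, lintegral_map (by fun_prop) (by fun_prop)]
    _ = ∫⁻ ω, ENNReal.ofReal (G 1 ω ^ r / r.factorial) * f (fun n => G (n + 1) ω) ∂P := by
        refine lintegral_congr fun ω => ?_
        simp only [w, F, hG]
        congr 2 with n
        rw [add_comm n 1, Finset.sum_range_add]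

/-- Change of measure for shifted exponential partial sums: with `Γ_n` the partial sums of
i.i.d. standard exponentials, `E[f(Γ_{r+1}, Γ_{r+2}, …)] = E[(Γ₁^r/r!) f(Γ₁, Γ₂, …)]`
for every measurable nonnegative `f`. -/
theorem change_of_measure_shifted_exponential_sums
    {Ω : Type*} [MeasurableSpace Ω] (P : Measure Ω) [IsProbabilityMeasure P]
    (E : ℕ → Ω → ℝ)
    (hE_meas : ∀ i, Measurable (E i))
    (hE_indep : iIndepFun E P)
    (hE_exp : ∀ i, Measure.map (E i) P = expMeasure 1)
    (G : ℕ → Ω → ℝ) (hG : ∀ n ω, G n ω = ∑ i ∈ Finset.range n, E i ω)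
    (r : ℕ)
    (f : (ℕ → ℝ) → ℝ≥0∞) (hf : Measurable f) :
    ∫⁻ ω, f (fun n => G (r + n + 1) ω) ∂P
      = ∫⁻ ω, ENNReal.ofReal (G 1 ω ^ r / r.factorial) * f (fun n => G (n + 1) ω) ∂P :=
  change_of_measure_shifted_exponential_sums_general P E hE_meas hE_indep hE_exp G hG r f hf
end
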